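/- arXiv:2604.17954 — 2 statements merged into one kernel-verified Lean document; each statement's English description precedes it below -/
import Mathlib

section
/- Complex change-of-variables (pushforward density) formula for the complex normalizing flow: let Ψ : ℂ^d → ℂ^d be a holomorphic bijection whose ℂ-linear derivative DΨ(z) is invertible at every z (equivalently det J_Ψ(z) ≠ 0 everywhere, where J_Ψ(z) is the complex Jacobian matrix), and let q₀ : ℂ^d → ℝ≥0∞ be measurable. Then the pushforward under Ψ of the measure with density q₀ with respect to Lebesgue measure is the measure with density w ↦ q₀(Ψ⁻¹(w)) / ENNReal.ofReal(Complex.normSq(det J_Ψ(Ψ⁻¹(w)))): Measure.map Ψ (volume.withDensity q₀) = volume.withDensity (fun w => q₀(Ψ⁻¹ w) / ENNReal.ofReal (normSq (det J_Ψ(Ψ⁻¹ w)))). -/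
open MeasureTheory

noncomputable instance (d : ℕ) : MeasurableSpace (EuclideanSpace ℂ (Fin d)) := borel _
instance (d : ℕ) : BorelSpace (EuclideanSpace ℂ (Fin d)) := ⟨rfl⟩

/-- The complex Jacobian matrix of a map `Ψ : ℂ^d → ℂ^d` at `z`: the matrix of the
ℂ-linear Fréchet derivative `fderiv ℂ Ψ z` in the standard basis. -/
noncomputable def complexJacobian (d : ℕ)
    (Ψ : EuclideanSpace ℂ (Fin d) → EuclideanSpace ℂ (Fin d))
    (z : EuclideanSpace ℂ (Fin d)) : Matrix (Fin d) (Fin d) ℂ :=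
  Matrix.of fun i j => fderiv ℂ Ψ z (EuclideanSpace.single j (1 : ℂ)) i

/-!
A holomorphic map is in particular real-differentiable, and its real derivative is the
ℂ-linear derivative with scalars restricted to ℝ, whose determinant is the field norm
`normSq` of the complex determinant. The real change-of-variables formula therefore says
that `Ψ` pushes `normSq (det J_Ψ) · volume` forward to `volume`; writing
`q₀ = normSq (det J_Ψ) · (q₀ / normSq (det J_Ψ))`, which is legitimate because the Jacobian
never vanishes, transports the density `q₀ / normSq (det J_Ψ)` along `Ψ⁻¹`.
-/

open Function

namespace MeasureTheory.Measure

variable {α β : Type*} [MeasurableSpace α] [MeasurableSpace β]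

theorem map_withDensity_comp {f : α → β} (hf : Measurable f) {g : β → ENNReal}
    (hg : Measurable g) (ν : Measure α) :
    (ν.withDensity (g ∘ f)).map f = (ν.map f).withDensity g := by
  ext s hs
  rw [map_apply hf hs, withDensity_apply _ hs, withDensity_apply _ (hf hs),
    setLIntegral_map hs hg hf]
  rfl

theorem map_withDensity_eq_withDensity_div {μ : Measure α} {ν : Measure β} {f : α → β}
    {g : β → α} (hf : Measurable f) (hg : Measurable g) (hgf : LeftInverse g f) {ρ q : α → ENNReal}
    (hρ : Measurable ρ) (hq : Measurable q) (hρ0 : ∀ x, ρ x ≠ 0) (hρtop : ∀ x, ρ x ≠ ⊤)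
    (h : (μ.withDensity ρ).map f = ν) :
    (μ.withDensity q).map f = ν.withDensity fun y => q (g y) / ρ (g y) := by
  have hq_eq : q = ρ * ((fun y => q (g y) / ρ (g y)) ∘ f) := funext fun x => by
    simp only [Pi.mul_apply, comp_apply, hgf x, ENNReal.mul_div_cancel (hρ0 x) (hρtop x)]
  have hdiv : Measurable fun y => q (g y) / ρ (g y) := (hq.comp hg).div (hρ.comp hg)
  conv_lhs =>
    rw [hq_eq, withDensity_mul μ hρ (hdiv.comp hf), map_withDensity_comp hf hdiv, h]

end MeasureTheory.Measure

theorem MeasurableEmbedding.measurable_invFun_of_surjective {α β : Type*} [MeasurableSpace α]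
    [MeasurableSpace β] [Nonempty α] {f : α → β} (hf : MeasurableEmbedding f)
    (hsurj : Surjective f) : Measurable (invFun f) := by
  have h : invFun f = hf.invFun := funext fun y => by
    obtain ⟨x, rfl⟩ := hsurj y
    rw [Function.leftInverse_invFun hf.injective x, hf.leftInverse_invFun x]
  exact h ▸ hf.measurable_invFun

theorem ContinuousLinearMap.det_restrictScalars_real {E : Type*} [NormedAddCommGroup E]
    [NormedSpace ℂ E] [FiniteDimensional ℂ E] (L : E →L[ℂ] E) :
    (L.restrictScalars ℝ).det = Complex.normSq L.det := by
  rw [ContinuousLinearMap.det, ContinuousLinearMap.coe_restrictScalars,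
    LinearMap.det_restrictScalars, Algebra.norm_complex_apply]

theorem map_withDensity_normSq_det_fderiv_eq_addHaar {E : Type*} [NormedAddCommGroup E]
    [NormedSpace ℂ E] [FiniteDimensional ℂ E] [MeasurableSpace E] [BorelSpace E]
    (μ : Measure E) [μ.IsAddHaarMeasure] {f : E → E} (hf : Differentiable ℂ f)
    (hinj : Injective f) :
    (μ.withDensity fun x => ENNReal.ofReal (Complex.normSq (fderiv ℂ f x).det)).map f =
      μ.restrict (Set.range f) := by
  have hderiv : ∀ x, HasFDerivAt f ((fderiv ℂ f x).restrictScalars ℝ) x := fun x =>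
    ((hf x).restrictScalars ℝ).hasFDerivAt.congr_fderiv ((hf x).fderiv_restrictScalars ℝ)
  have h := map_withDensity_abs_det_fderiv_eq_addHaar μ MeasurableSet.univ.nullMeasurableSet
    (fun x _ => (hderiv x).hasFDerivWithinAt) hinj.injOn
  simpa only [Measure.restrict_univ, Set.image_univ,
    ContinuousLinearMap.det_restrictScalars_real, abs_of_nonneg (Complex.normSq_nonneg _)] using h

theorem complexJacobian_det (d : ℕ) (Ψ : EuclideanSpace ℂ (Fin d) → EuclideanSpace ℂ (Fin d))
    (z : EuclideanSpace ℂ (Fin d)) : (complexJacobian d Ψ z).det = (fderiv ℂ Ψ z).det := by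
  rw [ContinuousLinearMap.det,
    ← LinearMap.det_toMatrix (EuclideanSpace.basisFun (Fin d) ℂ).toBasis]
  rfl

/-- **complex change-of-variables / pushforward density formula.**
Let `Ψ : ℂ^d → ℂ^d` be a holomorphic bijection (ℂ-differentiable everywhere) whose complex
Jacobian determinant never vanishes, and `q₀ : ℂ^d → ℝ≥0∞` measurable.  Then the
pushforward under `Ψ` of the measure with density `q₀` w.r.t. Lebesgue measure is the
measure with density
`w ↦ q₀ (Ψ⁻¹ w) / ENNReal.ofReal (normSq (det J_Ψ (Ψ⁻¹ w)))`. -/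
theorem stmt8 (d : ℕ)
    (Ψ : EuclideanSpace ℂ (Fin d) → EuclideanSpace ℂ (Fin d))
    (hΨ : ∀ z, DifferentiableAt ℂ Ψ z)
    (hbij : Function.Bijective Ψ)
    (hdet : ∀ z, (complexJacobian d Ψ z).det ≠ 0)
    (q₀ : EuclideanSpace ℂ (Fin d) → ENNReal)
    (hq₀ : Measurable q₀) :
    Measure.map Ψ (volume.withDensity q₀) =
      volume.withDensity (fun w =>
        q₀ (Function.invFun Ψ w) /
          ENNReal.ofReal (Complex.normSq ((complexJacobian d Ψ (Function.invFun Ψ w)).det))) := by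
  have hemb : MeasurableEmbedding Ψ :=
    (Differentiable.continuous hΨ).measurableEmbedding hbij.injective
  have hρ : Measurable fun z => ENNReal.ofReal (Complex.normSq (fderiv ℂ Ψ z).det) :=
    ENNReal.measurable_ofReal.comp <| Complex.continuous_normSq.measurable.comp <|
      ContinuousLinearMap.continuous_det.measurable.comp (measurable_fderiv ℂ Ψ)
  have hvol := map_withDensity_normSq_det_fderiv_eq_addHaar volume hΨ hbij.injective
  rw [hbij.surjective.range_eq, Measure.restrict_univ] at hvol
  have hρ0 : ∀ z, ENNReal.ofReal (Complex.normSq (fderiv ℂ Ψ z).det) ≠ 0 := fun z => by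
    simpa [← complexJacobian_det] using hdet z
  simpa only [complexJacobian_det] using Measure.map_withDensity_eq_withDensity_div
    hemb.measurable (hemb.measurable_invFun_of_surjective hbij.surjective)
    (leftInverse_invFun hbij.injective) hρ hq₀ hρ0 (fun _ => ENNReal.ofReal_ne_top) hvol
end

section
/- Instantaneous change of variables in flat space (material derivative of the log-density along the flow): let q : ℝ^n × ℝ → ℝ be everywhere positive and continuously differentiable, let X : ℝ^n × ℝ → ℝ^n be continuously differentiable in the space variable, and suppose the continuity equation holds pointwise: ∂q/∂t(x,t) + div_x (q(·,t)·X(·,t))(x) = 0 for all (x,t), where div_x is the spatial divergence (trace of the spatial Fréchet derivative). Let Z : ℝ → ℝ^n be differentiable with Z′(t) = X(Z(t), t) for all t. Then the function t ↦ Real.log (q(Z(t), t)) is differentiable, with derivative at each t equal to −(div_x X(·,t))(Z(t)). -/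
/-- The divergence of a vector field `V : ℝ^n → ℝ^n` at `x`: the trace of its Fréchet
derivative at `x`. -/
noncomputable def divergence (n : ℕ)
    (V : EuclideanSpace ℝ (Fin n) → EuclideanSpace ℝ (Fin n))
    (x : EuclideanSpace ℝ (Fin n)) : ℝ :=
  LinearMap.trace ℝ (EuclideanSpace ℝ (Fin n)) (fderiv ℝ V x).toLinearMap

/-!
Along a trajectory the chain rule gives `d/dt q(Z t, t) = ⟨∇ₓq, X⟩ + ∂ₜq`, while the product
rule turns the continuity equation into `∂ₜq = -⟨∇ₓq, X⟩ - q · div X`. Hence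
`d/dt q(Z t, t) = -q · div X`, and dividing by `q > 0` gives the derivative of `log q`.
-/

lemma divergence_smul {n : ℕ} {f : EuclideanSpace ℝ (Fin n) → ℝ}
    {V : EuclideanSpace ℝ (Fin n) → EuclideanSpace ℝ (Fin n)} {x : EuclideanSpace ℝ (Fin n)}
    (hf : DifferentiableAt ℝ f x) (hV : DifferentiableAt ℝ V x) :
    divergence n (fun y => f y • V y) x = fderiv ℝ f x (V x) + f x * divergence n V x := by
  have hlin : (f x • fderiv ℝ V x + (fderiv ℝ f x).smulRight (V x)).toLinearMap
      = f x • (fderiv ℝ V x).toLinearMap + (fderiv ℝ f x).toLinearMap.smulRight (V x) := rfl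
  rw [divergence, divergence, fderiv_fun_smul hf hV, hlin, map_add, map_smul,
    LinearMap.trace_smulRight, smul_eq_mul, add_comm]
  rfl

lemma hasDerivAt_comp_prodMk_id {E F : Type*} [NormedAddCommGroup E] [NormedSpace ℝ E]
    [NormedAddCommGroup F] [NormedSpace ℝ F] {q : E × ℝ → F} {Z : ℝ → E} {v : E} {t : ℝ}
    (hq : DifferentiableAt ℝ q (Z t, t)) (hZ : HasDerivAt Z v t) :
    HasDerivAt (fun s => q (Z s, s))
      (fderiv ℝ (fun x => q (x, t)) (Z t) v + deriv (fun s => q (Z t, s)) t) t := by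
  have hx : HasFDerivAt (fun x => q (x, t))
      ((fderiv ℝ q (Z t, t)).comp (ContinuousLinearMap.inl ℝ E ℝ)) (Z t) :=
    hq.hasFDerivAt.comp (Z t) (hasFDerivAt_prodMk_left (Z t) t)
  have ht : HasDerivAt (fun s => q (Z t, s)) (fderiv ℝ q (Z t, t) (0, 1)) t :=
    hq.hasFDerivAt.comp_hasDerivAt t ((hasDerivAt_const t (Z t)).prodMk (hasDerivAt_id t))
  rw [hx.fderiv, ht.deriv, ContinuousLinearMap.comp_apply, ContinuousLinearMap.inl_apply,
    ← map_add, Prod.mk_add_mk, add_zero, zero_add]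
  exact hq.hasFDerivAt.comp_hasDerivAt_of_eq t (hZ.prodMk (hasDerivAt_id t)) rfl

/-- **instantaneous change of variables in flat space.**  Let
`q : ℝ^n × ℝ → ℝ` be everywhere positive and `C¹`, `X : ℝ^n × ℝ → ℝ^n` be `C¹` in the
space variable, and suppose the continuity equation
`∂q/∂t (x,t) + div_x (q(·,t) • X(·,t)) (x) = 0` holds pointwise.  If `Z : ℝ → ℝ^n` solves
`Z′(t) = X (Z t, t)`, then `t ↦ log (q (Z t, t))` is differentiable with derivative
`−(div_x X(·,t)) (Z t)` at each `t`. -/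
theorem stmt13 (n : ℕ)
    (q : EuclideanSpace ℝ (Fin n) × ℝ → ℝ)
    (hqpos : ∀ p, 0 < q p)
    (hq : ContDiff ℝ 1 q)
    (X : EuclideanSpace ℝ (Fin n) × ℝ → EuclideanSpace ℝ (Fin n))
    (hX : ∀ t, ContDiff ℝ 1 (fun x => X (x, t)))
    (hcont : ∀ (x : EuclideanSpace ℝ (Fin n)) (t : ℝ),
      deriv (fun s => q (x, s)) t +
        divergence n (fun y => q (y, t) • X (y, t)) x = 0)
    (Z : ℝ → EuclideanSpace ℝ (Fin n))
    (hZ : ∀ t, HasDerivAt Z (X (Z t, t)) t) :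
    ∀ t, HasDerivAt (fun s => Real.log (q (Z s, s)))
      (-(divergence n (fun y => X (y, t)) (Z t))) t := by
  intro t
  have hqp : DifferentiableAt ℝ q (Z t, t) := hq.differentiable one_ne_zero _
  have hqx : DifferentiableAt ℝ (fun x => q (x, t)) (Z t) :=
    hqp.comp (Z t) (differentiableAt_id.prodMk (differentiableAt_const t))
  have hXx : DifferentiableAt ℝ (fun x => X (x, t)) (Z t) :=
    (hX t).differentiable one_ne_zero _
  have hce := hcont (Z t) t
  rw [divergence_smul hqx hXx] at hce
  convert (hasDerivAt_comp_prodMk_id hqp (hZ t)).log (hqpos _).ne' using 1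
  field_simp [(hqpos (Z t, t)).ne']
  linarith
end
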